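/- For positive integers a, b, and J ≥ 3, if H(a,J) ≥ H(b,J−1), then H(a+b, J) ≤ H(a,J) + H(b,J−1) + b. -/
import Mathlib


/-- A finite set of naturals is a Golomb ruler: all differences of
distinct pairs are distinct. -/
def IsGolomb (A : Finset ℕ) : Prop :=
  ∀ a ∈ A, ∀ b ∈ A, ∀ c ∈ A, ∀ d ∈ A,
    a ≠ b → c ≠ d → (a : ℤ) - b = (c : ℤ) - d → a = c ∧ b = d

/-- `F` is a family of `I` pairwise disjoint `J`-element Golomb rulers,
each contained in `{1, ..., n}`: an `(I,J,n)`-DGR. -/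
def IsDGR (I J n : ℕ) (F : Fin I → Finset ℕ) : Prop :=
  (∀ i, (F i).card = J) ∧ (∀ i, IsGolomb (F i)) ∧
  (∀ i, F i ⊆ Finset.Icc 1 n) ∧
  (∀ i j, i ≠ j → Disjoint (F i) (F j))

/-- `H I J` is the least positive `n` such that an `(I,J,n)`-DGR exists. -/
noncomputable def H (I J : ℕ) : ℕ :=
  sInf {n | 0 < n ∧ ∃ F : Fin I → Finset ℕ, IsDGR I J n F}

/-- `A` contains `I` pairwise disjoint `J`-element Golomb rulers. -/
def HasDGRin (I J : ℕ) (A : Finset ℕ) : Prop :=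
  ∃ F : Fin I → Finset ℕ,
    (∀ i, (F i).card = J) ∧ (∀ i, IsGolomb (F i)) ∧
    (∀ i, F i ⊆ A) ∧ (∀ i j, i ≠ j → Disjoint (F i) (F j))

/-- The defining set for `Y I J`. -/
def YSet (I J : ℕ) : Set ℕ :=
  {n | 0 < n ∧ ∀ A : Finset ℕ, (∀ a ∈ A, 0 < a) → A.card = n → HasDGRin I J A}

/-- `Y I J` is the least positive `n` such that every set of `n`
positive integers contains `I` disjoint `J`-element Golomb rulers. -/
noncomputable def Y (I J : ℕ) : ℕ := sInf (YSet I J)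

lemma golomb_image_add {A : Finset ℕ} (t : ℕ) (h : IsGolomb A) :
    IsGolomb (A.image (· + t)) := by
  intro p hp q hq r hr s hs hpq hrs heq
  simp only [Finset.mem_image] at hp hq hr hs
  obtain ⟨p', hp', rfl⟩ := hp
  obtain ⟨q', hq', rfl⟩ := hq
  obtain ⟨r', hr', rfl⟩ := hr
  obtain ⟨s', hs', rfl⟩ := hs
  have := h p' hp' q' hq' r' hr' s' hs' (by omega) (by omega) (by push_cast at heq ⊢; linarith)
  omega

lemma golomb_insert {B : Finset ℕ} {lo hi x : ℕ} (hB : IsGolomb B)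
    (hsub : B ⊆ Finset.Icc lo hi) (hx : x < lo) (hgap : hi + x < 2 * lo) :
    IsGolomb (insert x B) := by
  have bound : ∀ y ∈ B, lo ≤ y ∧ y ≤ hi := fun y hy => by
    have := hsub hy; simpa using this
  intro p hp q hq r hr s hs hpq hrs heq
  rcases Finset.mem_insert.1 hp with rfl | hp2 <;>
  rcases Finset.mem_insert.1 hq with rfl | hq2 <;>
  rcases Finset.mem_insert.1 hr with rfl | hr2 <;>
  rcases Finset.mem_insert.1 hs with rfl | hs2 <;>
  first
  | exact hB p hp2 q hq2 r hr2 s hs2 hpq hrs heq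
  | · try have h1 := bound p hp2
      try have h2 := bound q hq2
      try have h3 := bound r hr2
      try have h4 := bound s hs2
      omega

lemma pow_sub_lt {i j k l : ℕ} (hij : j < i) (hkl : l < k) (hik : i < k) :
    (2:ℤ)^i - 2^j < 2^k - 2^l := by
  have e1 : (2:ℤ)^i ≤ 2^(k-1) := pow_le_pow_right₀ (by norm_num) (by omega)
  have e2 : (2:ℤ)^l ≤ 2^(k-1) := pow_le_pow_right₀ (by norm_num) (by omega)
  have e3 : (2:ℤ)^(k-1) + 2^(k-1) = 2^k := by
    rw [← two_mul, ← pow_succ']; congr 1; omega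
  have e4 : (0:ℤ) < 2^j := by positivity
  linarith

lemma pow_sub_inj {i j k l : ℕ} (hij : j < i) (hkl : l < k)
    (h : (2:ℤ)^i - 2^j = 2^k - 2^l) : i = k ∧ j = l := by
  have hik : i = k := by
    rcases lt_trichotomy i k with h1 | h1 | h1
    · exact absurd h (ne_of_lt (pow_sub_lt hij hkl h1))
    · exact h1
    · exact absurd h.symm (ne_of_lt (pow_sub_lt hkl hij h1))
  subst hik
  refine ⟨rfl, ?_⟩
  have h2 : (2:ℤ)^j = 2^l := by linarith
  have h3 : ((2^j : ℕ) : ℤ) = ((2^l : ℕ) : ℤ) := by push_cast; exact h2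
  exact Nat.pow_right_injective (by norm_num) (Nat.cast_inj.mp h3)

lemma golomb_pow (J : ℕ) : IsGolomb ((Finset.range J).image (2 ^ ·)) := by
  intro p hp q hq r hr s hs hpq hrs heq
  simp only [Finset.mem_image, Finset.mem_range] at hp hq hr hs
  obtain ⟨i, hi, rfl⟩ := hp
  obtain ⟨j, hj, rfl⟩ := hq
  obtain ⟨k, hk, rfl⟩ := hr
  obtain ⟨l, hl, rfl⟩ := hs
  have hij : i ≠ j := fun h => hpq (by rw [h])
  have hkl : k ≠ l := fun h => hrs (by rw [h])
  push_cast at heq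
  have mono : ∀ u v : ℕ, u < v → (2:ℤ)^u < 2^v := fun u v huv =>
    pow_lt_pow_right₀ (by norm_num) huv
  rcases hij.lt_or_gt with h1 | h1 <;> rcases hkl.lt_or_gt with h2 | h2
  · obtain ⟨e1, e2⟩ := pow_sub_inj h1 h2 (by linarith)
    subst e1; subst e2; exact ⟨rfl, rfl⟩
  · have := mono _ _ h1; have := mono _ _ h2; linarith
  · have := mono _ _ h1; have := mono _ _ h2; linarith
  · obtain ⟨e1, e2⟩ := pow_sub_inj h1 h2 heq
    subst e1; subst e2; exact ⟨rfl, rfl⟩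

lemma dgr_exists (I J : ℕ) : ∃ n, 0 < n ∧ ∃ F : Fin I → Finset ℕ, IsDGR I J n F := by
  refine ⟨(I + 1) * 2 ^ J, by positivity,
    fun i => ((Finset.range J).image (2 ^ ·)).image (· + i.val * 2 ^ J), ?_, ?_, ?_, ?_⟩
  · intro i
    rw [Finset.card_image_of_injective _ (add_left_injective _),
      Finset.card_image_of_injective _ (Nat.pow_right_injective (le_refl 2)),
      Finset.card_range]
  · intro i; exact golomb_image_add _ (golomb_pow J)
  · intro i y hy
    simp only [Finset.mem_image, Finset.mem_range] at hy
    obtain ⟨z, ⟨t, ht, rfl⟩, rfl⟩ := hy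
    have h1 : 2 ^ t < 2 ^ J := Nat.pow_lt_pow_right one_lt_two ht
    have h2 : (1:ℕ) ≤ 2 ^ t := Nat.one_le_two_pow
    have h3 : i.val + 1 ≤ I + 1 := by omega
    have h4 : (i.val + 1) * 2 ^ J ≤ (I + 1) * 2 ^ J := Nat.mul_le_mul_right _ h3
    have e5 : (i.val + 1) * 2 ^ J = i.val * 2 ^ J + 2 ^ J := by ring
    simp only [Finset.mem_Icc]
    constructor <;> omega
  · intro i j hij
    rw [Finset.disjoint_left]
    intro z hz hz'
    simp only [Finset.mem_image, Finset.mem_range] at hz hz'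
    obtain ⟨w, ⟨t, ht, rfl⟩, rfl⟩ := hz
    obtain ⟨w', ⟨s, hs, hw'⟩, he⟩ := hz'
    have h1 : 2 ^ t < 2 ^ J := Nat.pow_lt_pow_right one_lt_two ht
    have h2 : (1:ℕ) ≤ 2 ^ t := Nat.one_le_two_pow
    have h1' : 2 ^ s < 2 ^ J := Nat.pow_lt_pow_right one_lt_two hs
    have h2' : (1:ℕ) ≤ 2 ^ s := Nat.one_le_two_pow
    have hijv : i.val ≠ j.val := fun h => hij (Fin.ext h)
    have e5 : (i.val + 1) * 2 ^ J = i.val * 2 ^ J + 2 ^ J := by ring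
    have e6 : (j.val + 1) * 2 ^ J = j.val * 2 ^ J + 2 ^ J := by ring
    rcases hijv.lt_or_gt with h | h
    · have : (i.val + 1) * 2 ^ J ≤ j.val * 2 ^ J := Nat.mul_le_mul_right _ (by omega)
      omega
    · have : (j.val + 1) * 2 ^ J ≤ i.val * 2 ^ J := Nat.mul_le_mul_right _ (by omega)
      omega

theorem H_add_mixed' (a b J : ℕ) (ha : 0 < a) (hb : 0 < b) (hJ : 3 ≤ J)
    (hge : H b (J - 1) ≤ H a J) :
    H (a + b) J ≤ H a J + H b (J - 1) + b := by
  have hSa : {n | 0 < n ∧ ∃ F : Fin a → Finset ℕ, IsDGR a J n F}.Nonempty := by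
    obtain ⟨n, hn, F, hF⟩ := dgr_exists a J; exact ⟨n, hn, F, hF⟩
  have hSb : {n | 0 < n ∧ ∃ F : Fin b → Finset ℕ, IsDGR b (J - 1) n F}.Nonempty := by
    obtain ⟨n, hn, F, hF⟩ := dgr_exists b (J - 1); exact ⟨n, hn, F, hF⟩
  have hmema : 0 < H a J ∧ ∃ F : Fin a → Finset ℕ, IsDGR a J (H a J) F :=
    Nat.sInf_mem hSa
  have hmemb : 0 < H b (J - 1) ∧
      ∃ F : Fin b → Finset ℕ, IsDGR b (J - 1) (H b (J - 1)) F :=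
    Nat.sInf_mem hSb
  set n := H a J with hndef
  set m := H b (J - 1) with hmdef
  obtain ⟨hn, F, hFc, hFg, hFs, hFd⟩ := hmema
  obtain ⟨hm, G, hGc, hGg, hGs, hGd⟩ := hmemb
  have hFb : ∀ i, ∀ y ∈ F i, 1 ≤ y ∧ y ≤ n := fun i y hy => by
    have := hFs i hy; simpa using this
  have hGb : ∀ i, ∀ y ∈ G i, 1 ≤ y ∧ y ≤ m := fun i y hy => by
    have := hGs i hy; simpa using this
  set K : Fin (a + b) → Finset ℕ := fun i =>
    if h : (i : ℕ) < a then (F ⟨i, h⟩).image (· + b)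
    else insert ((i : ℕ) - a + 1)
      ((G ⟨(i : ℕ) - a, by have := i.isLt; omega⟩).image (· + (n + b))) with hKdef
  have hK : IsDGR (a + b) J (n + m + b) K := by
    refine ⟨?_, ?_, ?_, ?_⟩
    · intro i
      by_cases h : (i : ℕ) < a
      · rw [hKdef]; simp only [dif_pos h]
        rw [Finset.card_image_of_injective _ (add_left_injective _)]
        exact hFc _
      · rw [hKdef]; simp only [dif_neg h]
        rw [Finset.card_insert_of_notMem, Finset.card_image_of_injective _
          (add_left_injective _), hGc]
        · omega
        · intro hmem
          simp only [Finset.mem_image] at hmem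
          obtain ⟨g, hg, he⟩ := hmem
          have := hGb _ g hg
          have := i.isLt
          omega
    · intro i
      by_cases h : (i : ℕ) < a
      · rw [hKdef]; simp only [dif_pos h]
        exact golomb_image_add _ (hFg _)
      · rw [hKdef]; simp only [dif_neg h]
        refine golomb_insert (lo := n + b + 1) (hi := n + b + m)
          (golomb_image_add _ (hGg _)) ?_ ?_ ?_
        · intro y hy
          simp only [Finset.mem_image] at hy
          obtain ⟨g, hg, rfl⟩ := hy
          have := hGb _ g hg
          simp only [Finset.mem_Icc]
          omega
        · have := i.isLt; omega
        · have := i.isLt; omega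
    · intro i y hy
      by_cases h : (i : ℕ) < a
      · rw [hKdef] at hy; simp only [dif_pos h] at hy
        simp only [Finset.mem_image] at hy
        obtain ⟨f, hf, rfl⟩ := hy
        have := hFb _ f hf
        simp only [Finset.mem_Icc]; omega
      · rw [hKdef] at hy; simp only [dif_neg h] at hy
        rcases Finset.mem_insert.1 hy with rfl | hy'
        · have := i.isLt; simp only [Finset.mem_Icc]; omega
        · simp only [Finset.mem_image] at hy'
          obtain ⟨g, hg, rfl⟩ := hy'
          have := hGb _ g hg
          simp only [Finset.mem_Icc]; omega
    · intro i j hij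
      have hijv : (i : ℕ) ≠ (j : ℕ) := fun h => hij (Fin.ext h)
      rw [Finset.disjoint_left]
      intro z hz hz'
      by_cases h1 : (i : ℕ) < a <;> by_cases h2 : (j : ℕ) < a
      · rw [hKdef] at hz hz'; simp only [dif_pos h1] at hz
        simp only [dif_pos h2] at hz'
        simp only [Finset.mem_image] at hz hz'
        obtain ⟨f1, hf1, rfl⟩ := hz
        obtain ⟨f2, hf2, he⟩ := hz'
        have hf12 : f2 = f1 := by omega
        subst hf12
        have hne : (⟨(i : ℕ), h1⟩ : Fin a) ≠ ⟨(j : ℕ), h2⟩ := by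
          intro hc
          exact hijv (congrArg Fin.val hc : ((⟨(i : ℕ), h1⟩ : Fin a) : ℕ) = ((⟨(j : ℕ), h2⟩ : Fin a) : ℕ))
        exact (Finset.disjoint_left.1 (hFd _ _ hne)) hf1 hf2
      · rw [hKdef] at hz hz'; simp only [dif_pos h1] at hz
        simp only [dif_neg h2] at hz'
        simp only [Finset.mem_image] at hz
        obtain ⟨f, hf, rfl⟩ := hz
        have hbf := hFb _ f hf
        rcases Finset.mem_insert.1 hz' with he | hz''
        · have := j.isLt; omega
        · simp only [Finset.mem_image] at hz''
          obtain ⟨g, hg, he⟩ := hz''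
          have := hGb _ g hg
          omega
      · rw [hKdef] at hz hz'; simp only [dif_neg h1] at hz
        simp only [dif_pos h2] at hz'
        simp only [Finset.mem_image] at hz'
        obtain ⟨f, hf, rfl⟩ := hz'
        have hbf := hFb _ f hf
        rcases Finset.mem_insert.1 hz with he | hz''
        · have := i.isLt; omega
        · simp only [Finset.mem_image] at hz''
          obtain ⟨g, hg, he⟩ := hz''
          have := hGb _ g hg
          omega
      · rw [hKdef] at hz hz'; simp only [dif_neg h1] at hz
        simp only [dif_neg h2] at hz'
        rcases Finset.mem_insert.1 hz with rfl | hzi <;>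
          rcases Finset.mem_insert.1 hz' with he | hzj
        · have := i.isLt; have := j.isLt; omega
        · simp only [Finset.mem_image] at hzj
          obtain ⟨g, hg, he⟩ := hzj
          have := hGb _ g hg
          have := i.isLt; omega
        · simp only [Finset.mem_image] at hzi
          obtain ⟨g, hg, rfl⟩ := hzi
          have := hGb _ g hg
          have := j.isLt; omega
        · simp only [Finset.mem_image] at hzi hzj
          obtain ⟨g1, hg1, rfl⟩ := hzi
          obtain ⟨g2, hg2, he⟩ := hzj
          have hg12 : g2 = g1 := by omega
          subst hg12
          have hne : (⟨(i : ℕ) - a, by have := i.isLt; omega⟩ : Fin b) ≠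
              ⟨(j : ℕ) - a, by have := j.isLt; omega⟩ := by
            intro hc
            have := congrArg Fin.val hc
            simp only at this
            omega
          exact (Finset.disjoint_left.1 (hGd _ _ hne)) hg1 hg2
  have hle : H (a + b) J ≤ n + m + b :=
    Nat.sInf_le ⟨by omega, K, hK⟩
  omega
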